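/- Let q ≥ 5 be a prime power and let μ ∈ F_q^* with μ ≠ 1, and additionally μ ≠ 1/9 when q is odd and not divisible by 3. Let Ñ₁(μ) be the number of c ∈ F_q^* such that the cubic t³ + ct² - t - μc has exactly one root in F_q. Then the number of planes of PG(3,q) that contain the line ℓ_μ, contain exactly one point of the twisted cubic C, and are not osculating planes, equals Ñ₁(μ) if μ is a square in F_q and equals Ñ₁(μ) + 1 if μ is a non-square in F_q. -/

import Mathlib

/-!
The planes through `ℓ_μ` form a pencil with normal vectors `(1, c, -1, -μc)`, `c ∈ F`, and
`(0, 1, 0, -μ)`. The point `P(t)` lies on the plane with parameter `c` iff `t` is a root of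
`t³ + ct² - t - μc`, and `P(∞)` lies on none of these planes; the remaining plane meets the
cubic in `P(∞)` and the points `P(t)` with `t² = μ`, so it is counted iff `μ` is a non-square.
The parameter `c = 0` never counts, as `t³ - t` has the roots `0` and `1`. No plane of the
pencil is osculating: an osculating plane through `ℓ_μ` forces `3 ≠ 0` and `9μ = 1`.
-/

/-- The spanning vector of the point `P(τ)` of the twisted cubic:
`P(t) = (t³, t², t, 1)` for `t ∈ F_q`, and `P(∞) = (1,0,0,0)`. -/
def Pvec {F : Type*} [Field F] : Option F → (Fin 4 → F)
  | none => ![1, 0, 0, 0]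
  | some t => ![t ^ 3, t ^ 2, t, 1]

/-- The osculating plane `π_osc(t)` of the twisted cubic, as a subset of `F_q⁴`. -/
def oscSet {F : Type*} [Field F] : Option F → Set (Fin 4 → F)
  | none => {x | x 3 = 0}
  | some t => {x | x 0 - 3 * t * x 1 + 3 * t ^ 2 * x 2 - t ^ 3 * x 3 = 0}

open Module

theorem Submodule.exists_dual_ker_eq_of_finrank_add_one {K V : Type*} [Field K] [AddCommGroup V]
    [Module K V] [FiniteDimensional K V] (W : Submodule K V)
    (hW : finrank K W + 1 = finrank K V) : ∃ f : Dual K V, LinearMap.ker f = W := by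
  have hquot : finrank K (V ⧸ W) = finrank K K := by
    have := W.finrank_quotient_add_finrank
    rw [finrank_self]; omega
  refine ⟨(LinearEquiv.ofFinrankEq _ _ hquot).toLinearMap ∘ₗ W.mkQ, ?_⟩
  rw [LinearMap.ker_comp, LinearEquiv.ker, Submodule.comap_bot, Submodule.ker_mkQ]

section Hyperplane

variable {K n : Type*} [Field K] [Fintype n] [DecidableEq n]

def hyperplane (v : n → K) : Submodule K (n → K) :=
  LinearMap.ker (dotProductEquiv K n v)

@[simp]
theorem mem_hyperplane {v x : n → K} : x ∈ hyperplane v ↔ v ⬝ᵥ x = 0 := Iff.rfl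

theorem hyperplane_smul {k : K} (hk : k ≠ 0) (v : n → K) :
    hyperplane (k • v) = hyperplane v := by
  rw [hyperplane, map_smul, LinearMap.ker_smul _ _ hk, hyperplane]

theorem finrank_hyperplane_add_one {v : n → K} (hv : v ≠ 0) :
    finrank K (hyperplane v) + 1 = Fintype.card n := by
  rw [← finrank_pi K]
  exact Dual.finrank_ker_add_one_of_ne_zero ((dotProductEquiv K n).map_ne_zero_iff.mpr hv)

theorem exists_hyperplane_eq (W : Submodule K (n → K)) (hW : finrank K W + 1 = Fintype.card n) :
    ∃ v, v ≠ 0 ∧ W = hyperplane v := by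
  obtain ⟨f, rfl⟩ := W.exists_dual_ker_eq_of_finrank_add_one (by rwa [finrank_pi])
  refine ⟨(dotProductEquiv K n).symm f, ?_, by rw [hyperplane, LinearEquiv.apply_symm_apply]⟩
  rintro hf
  rw [(dotProductEquiv K n).symm_apply_eq.mp hf, map_zero, LinearMap.ker_zero, finrank_top,
    finrank_pi] at hW
  omega

end Hyperplane

theorem FiniteField.natCast_eq_zero_iff_dvd_card {F : Type*} [Field F] [Fintype F] {p : ℕ}
    (hp : p.Prime) : (p : F) = 0 ↔ p ∣ Fintype.card F := by
  obtain ⟨m, hchar, hcard⟩ := FiniteField.card F (ringChar F)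
  rw [hcard, ringChar.spec, Nat.prime_dvd_prime_iff_eq hchar hp]
  constructor
  · rintro rfl
    exact dvd_pow_self _ m.ne_zero
  · intro h
    exact ((Nat.prime_dvd_prime_iff_eq hp hchar).mp (hp.dvd_of_dvd_pow h)).symm

theorem FiniteField.nine_mul_ne_one {F : Type*} [Field F] [Fintype F] {q : ℕ}
    (hcard : Fintype.card F = q) {μ : F} (hμ1 : μ ≠ 1)
    (hμ9 : Odd q → ¬ 3 ∣ q → μ ≠ 1 / 9)
    (h3 : (3 : F) ≠ 0) : 9 * μ ≠ 1 := by
  intro h9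
  by_cases h2 : (2 : F) = 0
  · exact hμ1 (by linear_combination h9 - 4 * μ * h2)
  have hodd : Odd q := by
    rw [Nat.odd_iff, ← Nat.two_dvd_ne_zero, ← hcard,
      ← natCast_eq_zero_iff_dvd_card Nat.prime_two]
    exact_mod_cast h2
  have hndvd : ¬ 3 ∣ q := by
    rw [← hcard, ← natCast_eq_zero_iff_dvd_card Nat.prime_three]
    exact_mod_cast h3
  have h9ne : (9 : F) ≠ 0 := by
    rw [show (9 : F) = 3 * 3 by norm_num]
    exact mul_ne_zero h3 h3
  exact hμ9 hodd hndvd (by rw [eq_div_iff h9ne]; linear_combination h9)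

theorem Set.ncard_setOf_option {α : Type*} [Finite α] (P : Option α → Prop)
    [Decidable (P none)] :
    {o | P o}.ncard = {a | P (some a)}.ncard + if P none then 1 else 0 := by
  have hsome : some '' {a | P (some a)} = {o | P o} \ {none} := by
    ext (_ | a) <;> simp
  rw [← Set.ncard_image_of_injective _ (Option.some_injective α), hsome]
  split_ifs with h
  · exact (Set.ncard_sdiff_singleton_add_one h).symm
  · rw [Set.sdiff_singleton_eq_self (s := {o | P o}) h, add_zero]

section TwistedCubic

variable {F : Type*} [Field F]

def ellMu (μ : F) : Submodule F (Fin 4 → F) := Submodule.span F {![0, μ, 0, 1], ![1, 0, 1, 0]}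

def pencilNormal (μ : F) : Option F → Fin 4 → F
  | none => ![0, 1, 0, -μ]
  | some c => ![1, c, -1, -μ * c]

def pencilPlane (μ : F) (o : Option F) : Submodule F (Fin 4 → F) :=
  hyperplane (pencilNormal μ o)

theorem ellMu_le_hyperplane_iff {μ : F} {v : Fin 4 → F} :
    ellMu μ ≤ hyperplane v ↔ v 2 = -v 0 ∧ v 3 = -μ * v 1 := by
  simp only [ellMu, Submodule.span_le, Set.insert_subset_iff, Set.singleton_subset_iff,
    SetLike.mem_coe, mem_hyperplane, dotProduct, Fin.sum_univ_four]
  simp only [Matrix.cons_val, mul_zero, mul_one, add_zero, zero_add]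
  constructor
  · rintro ⟨h1, h2⟩
    exact ⟨by linear_combination h2, by linear_combination h1⟩
  · rintro ⟨h1, h2⟩
    exact ⟨by linear_combination h2, by linear_combination h1⟩

theorem pencilNormal_ne_zero (μ : F) (o : Option F) : pencilNormal μ o ≠ 0 := by
  intro h
  cases o with
  | none => simpa [pencilNormal] using congrFun h 1
  | some c => simpa [pencilNormal] using congrFun h 0

theorem ellMu_le_pencilPlane (μ : F) (o : Option F) : ellMu μ ≤ pencilPlane μ o := by
  rw [pencilPlane, ellMu_le_hyperplane_iff]
  cases o <;> simp [pencilNormal]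

theorem finrank_pencilPlane (μ : F) (o : Option F) : finrank F (pencilPlane μ o) = 3 := by
  have := finrank_hyperplane_add_one (pencilNormal_ne_zero μ o)
  rw [Fintype.card_fin] at this
  exact Nat.add_right_cancel this

theorem exists_pencilPlane_eq {μ : F} {v : Fin 4 → F} (hv : v ≠ 0)
    (hle : ellMu μ ≤ hyperplane v) :
    ∃ o, hyperplane v = pencilPlane μ o := by
  obtain ⟨h2, h3⟩ := ellMu_le_hyperplane_iff.mp hle
  by_cases h0 : v 0 = 0
  · have h1 : v 1 ≠ 0 := by
      refine fun h1 => hv (funext fun i => ?_)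
      fin_cases i <;> simp [h0, h1, h2, h3]
    refine ⟨none, (congrArg hyperplane ?_).trans (hyperplane_smul h1 _)⟩
    funext i
    fin_cases i <;> simp [pencilNormal, h0, h2, h3, mul_comm]
  · refine ⟨some (v 1 / v 0), (congrArg hyperplane ?_).trans (hyperplane_smul h0 _)⟩
    funext i
    fin_cases i <;> simp [pencilNormal, h2, h3] <;> field_simp

theorem pencilPlane_injective (μ : F) : Function.Injective (pencilPlane μ) := by
  have eq_some : ∀ c o, pencilPlane μ (some c) = pencilPlane μ o → o = some c := by
    intro c o h
    have hc : ![c, -1, 0, 0] ∈ pencilPlane μ o := h ▸ by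
      simp [pencilPlane, pencilNormal, dotProduct, Fin.sum_univ_four]
    cases o with
    | none => simp [pencilPlane, pencilNormal, dotProduct, Fin.sum_univ_four] at hc
    | some c' =>
      have hcc' : c - c' = 0 := by
        simpa [pencilPlane, pencilNormal, dotProduct, Fin.sum_univ_four, sub_eq_add_neg] using hc
      rw [sub_eq_zero.mp hcc']
  intro o o' h
  cases o with
  | some c => exact (eq_some c o' h).symm
  | none =>
    cases o' with
    | none => rfl
    | some c => exact eq_some c none h.symm

theorem span_Pvec_injective : Function.Injective (fun τ : Option F => F ∙ Pvec τ) := by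
  intro τ σ h
  obtain ⟨z, hz⟩ := Submodule.span_singleton_eq_span_singleton.mp h
  have h3 := congrFun hz 3
  have h2 := congrFun hz 2
  cases τ with
  | none =>
    cases σ with
    | none => rfl
    | some s => simp [Pvec] at h3
  | some t =>
    cases σ with
    | none => simp [Pvec, Units.smul_def] at h3
    | some s =>
      simp only [Pvec, Units.smul_def, Pi.smul_apply, smul_eq_mul] at h2 h3
      simp_all

theorem ncard_setOf_span_Pvec_le (W : Submodule F (Fin 4 → F)) :
    {p : Submodule F (Fin 4 → F) | (∃ τ, p = F ∙ Pvec τ) ∧ p ≤ W}.ncard =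
      {τ | Pvec τ ∈ W}.ncard := by
  rw [← Set.ncard_image_of_injective _ span_Pvec_injective]
  congr 1
  ext p
  simp only [Set.mem_ofPred_eq, Set.mem_image]
  constructor
  · rintro ⟨⟨τ, rfl⟩, hle⟩
    exact ⟨τ, (Submodule.span_singleton_le_iff_mem _ _).mp hle, rfl⟩
  · rintro ⟨τ, hmem, rfl⟩
    exact ⟨⟨τ, rfl⟩, (Submodule.span_singleton_le_iff_mem _ _).mpr hmem⟩

@[simp]
theorem pencilNormal_some_dotProduct_Pvec_some (μ c t : F) :
    pencilNormal μ (some c) ⬝ᵥ Pvec (some t) = t ^ 3 + c * t ^ 2 - t - μ * c := by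
  simp only [pencilNormal, Pvec, dotProduct, Fin.sum_univ_four, Matrix.cons_val]
  ring

@[simp]
theorem pencilNormal_some_dotProduct_Pvec_none (μ c : F) :
    pencilNormal μ (some c) ⬝ᵥ Pvec none = 1 := by
  simp [pencilNormal, Pvec, dotProduct, Fin.sum_univ_four]

@[simp]
theorem pencilNormal_none_dotProduct_Pvec_some (μ t : F) :
    pencilNormal μ none ⬝ᵥ Pvec (some t) = t ^ 2 - μ := by
  simp only [pencilNormal, Pvec, dotProduct, Fin.sum_univ_four, Matrix.cons_val]
  ring

@[simp]
theorem pencilNormal_none_dotProduct_Pvec_none (μ : F) :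
    pencilNormal μ none ⬝ᵥ Pvec none = 0 := by
  simp [pencilNormal, Pvec, dotProduct, Fin.sum_univ_four]

theorem setOf_Pvec_mem_pencilPlane_some (μ c : F) :
    {τ | Pvec τ ∈ pencilPlane μ (some c)} =
      some '' {t | t ^ 3 + c * t ^ 2 - t - μ * c = 0} := by
  ext (_ | t) <;> simp [pencilPlane]

theorem setOf_Pvec_mem_pencilPlane_none (μ : F) :
    {τ | Pvec τ ∈ pencilPlane μ none} = insert none (some '' {t | t ^ 2 = μ}) := by
  ext (_ | t) <;> simp [pencilPlane, sub_eq_zero]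

theorem ncard_setOf_Pvec_mem_pencilPlane_none_eq_one_iff [Finite F] (μ : F) :
    {τ | Pvec τ ∈ pencilPlane μ none}.ncard = 1 ↔ ¬ IsSquare μ := by
  rw [setOf_Pvec_mem_pencilPlane_none, Set.ncard_insert_of_notMem (by simp),
    Set.ncard_image_of_injective _ (Option.some_injective F), add_eq_right, Set.ncard_eq_zero,
    Set.eq_empty_iff_forall_notMem]
  simp [IsSquare, sq, eq_comm]

theorem ne_zero_of_ncard_cubicRoots_eq_one {μ c : F}
    (h : {t : F | t ^ 3 + c * t ^ 2 - t - μ * c = 0}.ncard = 1) : c ≠ 0 := by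
  rintro rfl
  obtain ⟨a, ha⟩ := Set.ncard_eq_one.mp h
  have h0 : (0 : F) ∈ ({a} : Set F) := ha ▸ by simp
  have h1 : (1 : F) ∈ ({a} : Set F) := ha ▸ by simp
  exact zero_ne_one (h0.trans h1.symm)

theorem ne_oscSet_of_ellMu_le {μ : F} (h9 : (3 : F) ≠ 0 → 9 * μ ≠ 1)
    {W : Submodule F (Fin 4 → F)} (hle : ellMu μ ≤ W) (τ : Option F) :
    (W : Set (Fin 4 → F)) ≠ oscSet τ := by
  intro h
  have hv : ![0, μ, 0, 1] ∈ oscSet τ := h ▸ hle (Submodule.subset_span (by simp))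
  have hw : ![1, 0, 1, 0] ∈ oscSet τ := h ▸ hle (Submodule.subset_span (by simp))
  cases τ with
  | none => simp [oscSet] at hv
  | some s =>
    simp only [oscSet, Set.mem_ofPred_eq, Matrix.cons_val] at hv hw
    have hs : s ≠ 0 := fun hs0 => one_ne_zero (α := F) (by linear_combination hw - 3 * s * hs0)
    have h3 : (3 : F) ≠ 0 := fun h3 =>
      one_ne_zero (α := F) (by linear_combination hw - s ^ 2 * h3)
    have hμs : 3 * μ + s ^ 2 = 0 :=
      (mul_eq_zero.mp (by linear_combination -hv : s * (3 * μ + s ^ 2) = 0)).resolve_left hs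
    exact h9 h3 (by linear_combination 3 * hμs - hw)

theorem setOf_planes_one_point_eq {μ : F} (h9 : (3 : F) ≠ 0 → 9 * μ ≠ 1) :
    {W : Submodule F (Fin 4 → F) | finrank F W = 3 ∧ ellMu μ ≤ W ∧
      {p : Submodule F (Fin 4 → F) | (∃ τ, p = F ∙ Pvec τ) ∧ p ≤ W}.ncard = 1 ∧
      ∀ τ, (W : Set (Fin 4 → F)) ≠ oscSet τ} =
    pencilPlane μ '' {o | {τ | Pvec τ ∈ pencilPlane μ o}.ncard = 1} := by
  ext W
  constructor
  · rintro ⟨hW3, hle, hone, -⟩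
    obtain ⟨v, hv, rfl⟩ := exists_hyperplane_eq W (by rw [hW3, Fintype.card_fin])
    obtain ⟨o, ho⟩ := exists_pencilPlane_eq hv hle
    exact ⟨o, by rwa [Set.mem_ofPred_eq, ← ho, ← ncard_setOf_span_Pvec_le], ho.symm⟩
  · rintro ⟨o, hone, rfl⟩
    exact ⟨finrank_pencilPlane μ o, ellMu_le_pencilPlane μ o,
      (ncard_setOf_span_Pvec_le _).trans hone,
      ne_oscSet_of_ellMu_le h9 (ellMu_le_pencilPlane μ o)⟩

theorem ncard_pencilPlanes_one_point [Finite F] (μ : F) [Decidable (IsSquare μ)] :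
    {o | {τ | Pvec τ ∈ pencilPlane μ o}.ncard = 1}.ncard =
      {c : F | c ≠ 0 ∧ {t : F | t ^ 3 + c * t ^ 2 - t - μ * c = 0}.ncard = 1}.ncard +
        if IsSquare μ then 0 else 1 := by
  rw [Set.ncard_setOf_option]
  congr 1
  · congr 1
    ext c
    rw [Set.mem_ofPred_eq, Set.mem_ofPred_eq, setOf_Pvec_mem_pencilPlane_some,
      Set.ncard_image_of_injective _ (Option.some_injective F)]
    exact ⟨fun h => ⟨ne_zero_of_ncard_cubicRoots_eq_one h, h⟩, And.right⟩
  · simp only [ncard_setOf_Pvec_mem_pencilPlane_none_eq_one_iff]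
    split_ifs <;> simp_all

end TwistedCubic

theorem stmt10_general (q : ℕ)
    (F : Type*) [Field F] [Fintype F] (hcard : Fintype.card F = q)
    (μ : F) (hμ1 : μ ≠ 1)
    (hμ9 : Odd q → ¬ (3 ∣ q) → μ ≠ 1 / 9) :
    let lmu : Submodule F (Fin 4 → F) := Submodule.span F {![0, μ, 0, 1], ![1, 0, 1, 0]}
    let Ntilde1 : ℕ := Set.ncard {c : F | c ≠ 0 ∧
      ({t : F | t ^ 3 + c * t ^ 2 - t - μ * c = 0} : Set F).ncard = 1}
    let n : ℕ := Set.ncard {W : Submodule F (Fin 4 → F) |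
      Module.finrank F W = 3 ∧ lmu ≤ W ∧
      Set.ncard {p : Submodule F (Fin 4 → F) |
        (∃ τ : Option F, p = Submodule.span F {Pvec τ}) ∧ p ≤ W} = 1 ∧
      ∀ τ : Option F, (W : Set (Fin 4 → F)) ≠ oscSet τ}
    (IsSquare μ → n = Ntilde1) ∧ (¬ IsSquare μ → n = Ntilde1 + 1) := by
  intro lmu Ntilde1 n
  classical
  have hn : n = Ntilde1 + if IsSquare μ then 0 else 1 := by
    rw [← ncard_pencilPlanes_one_point,
      ← Set.ncard_image_of_injective _ (pencilPlane_injective μ),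
      ← setOf_planes_one_point_eq (FiniteField.nine_mul_ne_one hcard hμ1 hμ9)]
    rfl
  exact ⟨fun h => by simpa [h] using hn, fun h => by simpa [h] using hn⟩

/-- Let `q ≥ 5` be a prime power, `μ ∈ F_q^*`, `μ ≠ 1`, and moreover
`μ ≠ 1/9` when `q` is odd and not divisible by `3`. Let `Ñ₁(μ)` be the number of
`c ∈ F_q^*` such that `t³ + ct² - t - μc` has exactly one root in `F_q`. Then the number
of planes of `PG(3,q)` containing the line `ℓ_μ`, containing exactly one point of the
twisted cubic, and not osculating, equals `Ñ₁(μ)` if `μ` is a square and `Ñ₁(μ) + 1`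
otherwise. -/
theorem stmt10 (q : ℕ) (hq5 : 5 ≤ q)
    (F : Type*) [Field F] [Fintype F] (hcard : Fintype.card F = q)
    (μ : F) (hμ0 : μ ≠ 0) (hμ1 : μ ≠ 1)
    (hμ9 : Odd q → ¬ (3 ∣ q) → μ ≠ 1 / 9) :
    let lmu : Submodule F (Fin 4 → F) := Submodule.span F {![0, μ, 0, 1], ![1, 0, 1, 0]}
    let Ntilde1 : ℕ := Set.ncard {c : F | c ≠ 0 ∧
      ({t : F | t ^ 3 + c * t ^ 2 - t - μ * c = 0} : Set F).ncard = 1}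
    let n : ℕ := Set.ncard {W : Submodule F (Fin 4 → F) |
      Module.finrank F W = 3 ∧ lmu ≤ W ∧
      Set.ncard {p : Submodule F (Fin 4 → F) |
        (∃ τ : Option F, p = Submodule.span F {Pvec τ}) ∧ p ≤ W} = 1 ∧
      ∀ τ : Option F, (W : Set (Fin 4 → F)) ≠ oscSet τ}
    (IsSquare μ → n = Ntilde1) ∧ (¬ IsSquare μ → n = Ntilde1 + 1) :=
  stmt10_general q F hcard μ hμ1 hμ9
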